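/- arXiv:0708.0719 — 7 statements merged into one kernel-verified Lean document; each statement's English description precedes it below -/
import Mathlib

section
/- The point A₂ = ((c₁μ₁/α₁)(1 - 1/R₁), c₁(1 - 1/R₁), 0, 0), where R₁ = α₁φ₁/(μ₁(α₁+β₁)), is an equilibrium of the system, i.e., F(A₂) = 0. -/
/-- A₂ = ((c₁μ₁/α₁)(1 - 1/R₁), c₁(1 - 1/R₁), 0, 0) is an equilibrium of the system. -/
theorem A2_equilibrium
    (α₁ β₁ μ₁ φ₁ c₁ k₁ α₂ β₂ μ₂ φ₂ c₂ k₂ : ℝ)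
    (hα₁ : 0 < α₁) (hβ₁ : 0 < β₁) (hμ₁ : 0 < μ₁) (hφ₁ : 0 < φ₁) (hc₁ : 0 < c₁) (hk₁ : 0 < k₁)
    (hα₂ : 0 < α₂) (hβ₂ : 0 < β₂) (hμ₂ : 0 < μ₂) (hφ₂ : 0 < φ₂) (hc₂ : 0 < c₂) (hk₂ : 0 < k₂)
    (R₁ : ℝ) (hR₁ : R₁ = α₁ * φ₁ / (μ₁ * (α₁ + β₁)))
    (F : ℝ × ℝ × ℝ × ℝ → ℝ × ℝ × ℝ × ℝ)
    (hF : ∀ P M L G : ℝ, F (P, M, L, G) =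
      (φ₁ * (1 - M / c₁) * M - (α₁ + β₁) * P - k₁ * P * G,
       α₁ * P - μ₁ * M,
       φ₂ * (1 - G / c₂) * G - (α₂ + β₂) * L + k₂ * P * G,
       α₂ * L - μ₂ * G)) :
    F ((c₁ * μ₁ / α₁) * (1 - 1 / R₁), c₁ * (1 - 1 / R₁), 0, 0) = (0, 0, 0, 0) := by
  rw [hF, hR₁]
  have h1 : α₁ ≠ 0 := hα₁.ne'
  have h2 : μ₁ ≠ 0 := hμ₁.ne'
  have h3 : φ₁ ≠ 0 := hφ₁.ne'
  have h4 : c₁ ≠ 0 := hc₁.ne'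
  have h5 : α₁ + β₁ ≠ 0 := by positivity
  refine Prod.ext ?_ (Prod.ext ?_ (Prod.ext ?_ ?_)) <;> simp <;> field_simp <;> ring
end

section
/- The point A₄ = (P₄, M₄, L₄, G₄) with P₄ = c₁μ₁φ₂(α₁φ₁(1-1/R₁) - μ₁c₂k₁(1-1/R₂))/D, M₄ = c₁α₁φ₂(α₁φ₁(1-1/R₁) - μ₁c₂k₁(1-1/R₂))/D, L₄ = c₂μ₂α₁φ₁(c₁μ₁k₂(1-1/R₁) + α₁φ₂(1-1/R₂))/(α₂D), G₄ = c₂α₁φ₁(c₁μ₁k₂(1-1/R₁) + α₁φ₂(1-1/R₂))/D, where D = α₁²φ₁φ₂ + μ₁²c₁c₂k₁k₂, is an equilibrium of the system, i.e., F(A₄) = 0. -/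
set_option maxHeartbeats 2000000


/-- The interior point A₄ is an equilibrium of the system. -/
theorem A4_equilibrium
    (α₁ β₁ μ₁ φ₁ c₁ k₁ α₂ β₂ μ₂ φ₂ c₂ k₂ : ℝ)
    (hα₁ : 0 < α₁) (hβ₁ : 0 < β₁) (hμ₁ : 0 < μ₁) (hφ₁ : 0 < φ₁) (hc₁ : 0 < c₁) (hk₁ : 0 < k₁)
    (hα₂ : 0 < α₂) (hβ₂ : 0 < β₂) (hμ₂ : 0 < μ₂) (hφ₂ : 0 < φ₂) (hc₂ : 0 < c₂) (hk₂ : 0 < k₂)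
    (R₁ R₂ D P₄ M₄ L₄ G₄ : ℝ)
    (hR₁ : R₁ = α₁ * φ₁ / (μ₁ * (α₁ + β₁)))
    (hR₂ : R₂ = α₂ * φ₂ / (μ₂ * (α₂ + β₂)))
    (hD : D = α₁ ^ 2 * φ₁ * φ₂ + μ₁ ^ 2 * c₁ * c₂ * k₁ * k₂)
    (hP₄ : P₄ = c₁ * μ₁ * φ₂ * (α₁ * φ₁ * (1 - 1 / R₁) - μ₁ * c₂ * k₁ * (1 - 1 / R₂)) / D)
    (hM₄ : M₄ = c₁ * α₁ * φ₂ * (α₁ * φ₁ * (1 - 1 / R₁) - μ₁ * c₂ * k₁ * (1 - 1 / R₂)) / D)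
    (hL₄ : L₄ = c₂ * μ₂ * α₁ * φ₁ * (c₁ * μ₁ * k₂ * (1 - 1 / R₁) + α₁ * φ₂ * (1 - 1 / R₂)) / (α₂ * D))
    (hG₄ : G₄ = c₂ * α₁ * φ₁ * (c₁ * μ₁ * k₂ * (1 - 1 / R₁) + α₁ * φ₂ * (1 - 1 / R₂)) / D)
    (F : ℝ × ℝ × ℝ × ℝ → ℝ × ℝ × ℝ × ℝ)
    (hF : ∀ P M L G : ℝ, F (P, M, L, G) =
      (φ₁ * (1 - M / c₁) * M - (α₁ + β₁) * P - k₁ * P * G,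
       α₁ * P - μ₁ * M,
       φ₂ * (1 - G / c₂) * G - (α₂ + β₂) * L + k₂ * P * G,
       α₂ * L - μ₂ * G)) :
    F (P₄, M₄, L₄, G₄) = (0, 0, 0, 0) := by
  subst hD hR₁ hR₂ hP₄ hM₄ hL₄ hG₄
  have hD0 : α₁ ^ 2 * φ₁ * φ₂ + μ₁ ^ 2 * c₁ * c₂ * k₁ * k₂ ≠ 0 := by positivity
  have hμβ : μ₁ * (α₁ + β₁) ≠ 0 := by positivity
  have hμβ2 : μ₂ * (α₂ + β₂) ≠ 0 := by positivity
  rw [hF]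
  refine Prod.ext ?_ (Prod.ext ?_ (Prod.ext ?_ ?_)) <;> simp only <;>
    field_simp <;> ring
end

section
/- If R₁ > 1, R₂ > 1, and k₁ < k₁max := α₁φ₁(1 - 1/R₁)/(c₂μ₁(1 - 1/R₂)), then all four coordinates P₄, M₄, L₄, G₄ of the equilibrium A₄ are positive. -/
/-- If R₁ > 1, R₂ > 1 and k₁ < k₁max then all coordinates of A₄ are positive. -/
theorem A4_coords_positive
    (α₁ β₁ μ₁ φ₁ c₁ k₁ α₂ β₂ μ₂ φ₂ c₂ k₂ : ℝ)
    (hα₁ : 0 < α₁) (hβ₁ : 0 < β₁) (hμ₁ : 0 < μ₁) (hφ₁ : 0 < φ₁) (hc₁ : 0 < c₁) (hk₁ : 0 < k₁)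
    (hα₂ : 0 < α₂) (hβ₂ : 0 < β₂) (hμ₂ : 0 < μ₂) (hφ₂ : 0 < φ₂) (hc₂ : 0 < c₂) (hk₂ : 0 < k₂)
    (R₁ R₂ D P₄ M₄ L₄ G₄ : ℝ)
    (hR₁ : R₁ = α₁ * φ₁ / (μ₁ * (α₁ + β₁)))
    (hR₂ : R₂ = α₂ * φ₂ / (μ₂ * (α₂ + β₂)))
    (hD : D = α₁ ^ 2 * φ₁ * φ₂ + μ₁ ^ 2 * c₁ * c₂ * k₁ * k₂)
    (hP₄ : P₄ = c₁ * μ₁ * φ₂ * (α₁ * φ₁ * (1 - 1 / R₁) - μ₁ * c₂ * k₁ * (1 - 1 / R₂)) / D)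
    (hM₄ : M₄ = c₁ * α₁ * φ₂ * (α₁ * φ₁ * (1 - 1 / R₁) - μ₁ * c₂ * k₁ * (1 - 1 / R₂)) / D)
    (hL₄ : L₄ = c₂ * μ₂ * α₁ * φ₁ * (c₁ * μ₁ * k₂ * (1 - 1 / R₁) + α₁ * φ₂ * (1 - 1 / R₂)) / (α₂ * D))
    (hG₄ : G₄ = c₂ * α₁ * φ₁ * (c₁ * μ₁ * k₂ * (1 - 1 / R₁) + α₁ * φ₂ * (1 - 1 / R₂)) / D)
    (hR₁gt : 1 < R₁) (hR₂gt : 1 < R₂)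
    (hk : k₁ < α₁ * φ₁ * (1 - 1 / R₁) / (c₂ * μ₁ * (1 - 1 / R₂))) :
    0 < P₄ ∧ 0 < M₄ ∧ 0 < L₄ ∧ 0 < G₄ := by 
  have h1 : 0 < 1 - 1 / R₁ := by
    have : 1 / R₁ < 1 := by
      rw [div_lt_one (lt_trans one_pos hR₁gt)]; exact hR₁gt
    linarith
  have h2 : 0 < 1 - 1 / R₂ := by
    have : 1 / R₂ < 1 := by
      rw [div_lt_one (lt_trans one_pos hR₂gt)]; exact hR₂gt
    linarith
  have hDpos : 0 < D := by rw [hD]; positivity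
  have hdenom : 0 < c₂ * μ₁ * (1 - 1 / R₂) := by positivity
  have hkey : μ₁ * c₂ * k₁ * (1 - 1 / R₂) < α₁ * φ₁ * (1 - 1 / R₁) := by
    have := (lt_div_iff₀ hdenom).mp hk
    nlinarith
  have hA : 0 < α₁ * φ₁ * (1 - 1 / R₁) - μ₁ * c₂ * k₁ * (1 - 1 / R₂) := by linarith
  have hB : 0 < c₁ * μ₁ * k₂ * (1 - 1 / R₁) + α₁ * φ₂ * (1 - 1 / R₂) := by positivity
  refine ⟨?_, ?_, ?_, ?_⟩
  · rw [hP₄]; positivity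
  · rw [hM₄]; positivity
  · rw [hL₄]; positivity
  · rw [hG₄]; positivity
end

section
/- (Routh–Hurwitz for degree 4) A real monic polynomial λ⁴ + a₁λ³ + a₂λ² + a₃λ + a₄ has all roots with strictly negative real part if and only if a₁ > 0, a₂ > 0, a₃ > 0, a₄ > 0 and a₁a₂a₃ - a₃² - a₁²a₄ > 0. -/
/-- Every real number has a complex square root that is real or purely imaginary. -/
lemma aux_sqrt (d : ℝ) : ∃ w : ℂ, w ^ 2 = (d : ℂ) ∧ (w.im = 0 ∨ w.re = 0) := by
  rcases le_or_gt 0 d with hd | hd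
  · refine ⟨(Real.sqrt d : ℝ), ?_, Or.inl rfl⟩
    rw [← Complex.ofReal_pow]
    norm_num [Real.sq_sqrt hd]
  · refine ⟨(Real.sqrt (-d) : ℝ) * Complex.I, ?_, Or.inr (by simp)⟩
    have : (Real.sqrt (-d)) ^ 2 = -d := Real.sq_sqrt (by linarith)
    rw [mul_pow, Complex.I_sq]
    rw [← Complex.ofReal_pow, this]
    push_cast
    ring

/-- Roots of a real monic quadratic, with structure. -/
lemma aux_quad_roots (p q : ℝ) : ∃ z₁ z₂ : ℂ,
    z₁ + z₂ = (-p : ℝ) ∧ z₁ * z₂ = (q : ℝ) ∧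
    (z₂ = (starRingEnd ℂ) z₁ ∨ (z₁.im = 0 ∧ z₂.im = 0)) := by
  obtain ⟨w, hw, hcase⟩ := aux_sqrt (p ^ 2 - 4 * q)
  refine ⟨(-(p : ℂ) + w) / 2, (-(p : ℂ) - w) / 2, by push_cast; ring, ?_, ?_⟩
  · have : ((-(p : ℂ) + w) / 2) * ((-(p : ℂ) - w) / 2)
        = ((p : ℂ) ^ 2 - w ^ 2) / 4 := by ring
    rw [this, hw]
    push_cast
    ring
  · rcases hcase with h | h
    · right
      constructor <;> simp [Complex.div_im, Complex.add_im, Complex.sub_im, h]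
    · left
      apply Complex.ext <;>
        simp [Complex.div_re, Complex.div_im, h] <;> ring

/-- Hurwitz criterion for monic real quadratics. -/
lemma aux_quad_hurwitz (p q : ℝ) :
    (∀ z : ℂ, z ^ 2 + (p : ℂ) * z + (q : ℂ) = 0 → z.re < 0) ↔ (0 < p ∧ 0 < q) := by
  constructor
  · intro h
    obtain ⟨z₁, z₂, hsum, hprod, hstruct⟩ := aux_quad_roots p q
    have hr1 : z₁ ^ 2 + (p : ℂ) * z₁ + (q : ℂ) = 0 := by
      have hp : (p : ℂ) = -(z₁ + z₂) := by rw [hsum]; push_cast; ring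
      have hq : (q : ℂ) = z₁ * z₂ := hprod.symm
      rw [hp, hq]; ring
    have hr2 : z₂ ^ 2 + (p : ℂ) * z₂ + (q : ℂ) = 0 := by
      have hp : (p : ℂ) = -(z₁ + z₂) := by rw [hsum]; push_cast; ring
      have hq : (q : ℂ) = z₁ * z₂ := hprod.symm
      rw [hp, hq]; ring
    have h1 := h z₁ hr1
    have h2 := h z₂ hr2
    have hsre : z₁.re + z₂.re = -p := by
      have := congrArg Complex.re hsum
      simpa using this
    have hqre : z₁.re * z₂.re - z₁.im * z₂.im = q := by
      have := congrArg Complex.re hprod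
      simpa [Complex.mul_re] using this
    constructor
    · linarith
    · rcases hstruct with hc | ⟨hi1, hi2⟩
      · have hre : z₂.re = z₁.re := by rw [hc]; simp
        have him : z₂.im = -z₁.im := by rw [hc]; simp
        rw [hre, him] at hqre
        nlinarith [mul_pos (neg_pos.mpr h1) (neg_pos.mpr h1), sq_nonneg z₁.im]
      · rw [hi1, hi2] at hqre
        nlinarith
  · rintro ⟨hp, hq⟩ z hz
    have hre : z.re ^ 2 - z.im ^ 2 + p * z.re + q = 0 := by
      have := congrArg Complex.re hz
      simpa [Complex.add_re, Complex.mul_re, pow_two, Complex.mul_im] using this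
    have him : 2 * z.re * z.im + p * z.im = 0 := by
      have := congrArg Complex.im hz
      simp [Complex.add_im, Complex.mul_im, pow_two, Complex.mul_re] at this
      linarith
    have him' : z.im * (2 * z.re + p) = 0 := by linarith
    rcases mul_eq_zero.mp him' with h0 | h0
    · rw [h0] at hre
      by_contra hcon
      push_neg at hcon
      nlinarith
    · nlinarith

/-- Depressed quartic factorization data via the resolvent cubic. -/
lemma aux_depressed (P Q R : ℝ) :
    ∃ t α β : ℝ, α + β - t ^ 2 = P ∧ t * (β - α) = Q ∧ α * β = R := by
  by_cases hQ : Q = 0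
  · rcases le_or_gt (4 * R) (P ^ 2) with hD | hD
    · -- t = 0, split the quadratic in x²
      refine ⟨0, (P - Real.sqrt (P ^ 2 - 4 * R)) / 2, (P + Real.sqrt (P ^ 2 - 4 * R)) / 2,
        by ring, by simp [hQ], ?_⟩
      have h1 : Real.sqrt (P ^ 2 - 4 * R) ^ 2 = P ^ 2 - 4 * R :=
        Real.sq_sqrt (by linarith)
      nlinarith
    · -- complex pair case: R > 0
      have hR : 0 < R := by nlinarith
      have hsR : Real.sqrt R ^ 2 = R := Real.sq_sqrt hR.le
      have hsRpos : 0 < Real.sqrt R := Real.sqrt_pos.mpr hR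
      have hy : 0 < -P + 2 * Real.sqrt R := by nlinarith
      refine ⟨Real.sqrt (-P + 2 * Real.sqrt R), Real.sqrt R, Real.sqrt R, ?_, by rw [hQ]; ring,
        by nlinarith⟩
      have := Real.sq_sqrt hy.le
      nlinarith
  · -- resolvent cubic has a positive root
    set f : ℝ → ℝ := fun y => y ^ 3 + 2 * P * y ^ 2 + (P ^ 2 - 4 * R) * y - Q ^ 2 with hf
    have hcont : Continuous f := by fun_prop
    set M : ℝ := 1 + |2 * P| + |P ^ 2 - 4 * R| + Q ^ 2 with hM
    have hM1 : 1 ≤ M := by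
      nlinarith [abs_nonneg (2 * P), abs_nonneg (P ^ 2 - 4 * R), sq_nonneg Q]
    have hfM : 0 < f M := by
      have h1 : -(|2 * P|) ≤ 2 * P := neg_abs_le _
      have h2 : -(|P ^ 2 - 4 * R|) ≤ P ^ 2 - 4 * R := neg_abs_le _
      have ha : (0:ℝ) ≤ |2 * P| := abs_nonneg _
      have hb : (0:ℝ) ≤ |P ^ 2 - 4 * R| := abs_nonneg _
      have hq2 : (0:ℝ) ≤ Q ^ 2 := sq_nonneg _
      simp only [hf]
      nlinarith [sq_nonneg M, sq_nonneg (M - 1), mul_le_mul_of_nonneg_right h1 (sq_nonneg M),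
        mul_le_mul_of_nonneg_right h2 (by nlinarith : (0:ℝ) ≤ M)]
    have hf0 : f 0 < 0 := by
      simp only [hf]
      have : Q ^ 2 > 0 := by positivity
      nlinarith
    have hsub := intermediate_value_Icc (by linarith : (0:ℝ) ≤ M) hcont.continuousOn
    have h0mem : (0:ℝ) ∈ Set.Icc (f 0) (f M) := ⟨hf0.le, hfM.le⟩
    obtain ⟨y, hy_mem, hy_eq⟩ := hsub h0mem
    have hy0 : 0 < y := by
      rcases lt_or_eq_of_le hy_mem.1 with h | h
      · exact h
      · exfalso; rw [← h] at hy_eq; rw [hy_eq] at hf0; exact lt_irrefl 0 hf0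
    have hyroot : y ^ 3 + 2 * P * y ^ 2 + (P ^ 2 - 4 * R) * y - Q ^ 2 = 0 := hy_eq
    have ht : Real.sqrt y ^ 2 = y := Real.sq_sqrt hy0.le
    have htpos : 0 < Real.sqrt y := Real.sqrt_pos.mpr hy0
    refine ⟨Real.sqrt y, ((P + y) - Q / Real.sqrt y) / 2, ((P + y) + Q / Real.sqrt y) / 2,
      by nlinarith, ?_, ?_⟩
    · field_simp
      ring
    · have hQs : (Q / Real.sqrt y) ^ 2 = Q ^ 2 / y := by
        rw [div_pow, ht]
      have : (((P + y) - Q / Real.sqrt y) / 2) * (((P + y) + Q / Real.sqrt y) / 2)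
          = ((P + y) ^ 2 - Q ^ 2 / y) / 4 := by rw [← hQs]; ring
      rw [this]
      have hyne : y ≠ 0 := hy0.ne'
      field_simp
      nlinarith
/-- Any real monic quartic factors into two real monic quadratics (coefficient form). -/
lemma aux_factor (a₁ a₂ a₃ a₄ : ℝ) : ∃ p q r s : ℝ,
    a₁ = p + r ∧ a₂ = q + s + p * r ∧ a₃ = p * s + q * r ∧ a₄ = q * s := by
  obtain ⟨t, α, β, h1, h2, h3⟩ :=
    aux_depressed (a₂ - 6 * (a₁ / 4) ^ 2) (a₃ - 2 * (a₁ / 4) * a₂ + 8 * (a₁ / 4) ^ 3)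
      (a₄ - (a₁ / 4) ^ 4 - (a₁ / 4) ^ 2 * (a₂ - 6 * (a₁ / 4) ^ 2)
        - (a₁ / 4) * (a₃ - 2 * (a₁ / 4) * a₂ + 8 * (a₁ / 4) ^ 3))
  refine ⟨2 * (a₁ / 4) + t, (a₁ / 4) ^ 2 + t * (a₁ / 4) + α,
    2 * (a₁ / 4) - t, (a₁ / 4) ^ 2 - t * (a₁ / 4) + β, by ring, ?_, ?_, ?_⟩
  · linear_combination -h1
  · linear_combination -(2 * (a₁ / 4)) * h1 - h2
  · linear_combination -((a₁ / 4) ^ 2) * h1 - (a₁ / 4) * h2 - h3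

/-- Routh–Hurwitz criterion for monic real quartics: all complex roots have strictly
negative real part iff all coefficients are positive and a₁a₂a₃ - a₃² - a₁²a₄ > 0. -/
theorem routh_hurwitz_quartic
    (a₁ a₂ a₃ a₄ : ℝ) :
    (∀ z : ℂ, z ^ 4 + (a₁ : ℂ) * z ^ 3 + (a₂ : ℂ) * z ^ 2 + (a₃ : ℂ) * z + (a₄ : ℂ) = 0 →
      z.re < 0) ↔
    (0 < a₁ ∧ 0 < a₂ ∧ 0 < a₃ ∧ 0 < a₄ ∧
      0 < a₁ * a₂ * a₃ - a₃ ^ 2 - a₁ ^ 2 * a₄) := by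
  obtain ⟨p, q, r, s, h1, h2, h3, h4⟩ := aux_factor a₁ a₂ a₃ a₄
  have hfac : ∀ z : ℂ, z ^ 4 + (a₁ : ℂ) * z ^ 3 + (a₂ : ℂ) * z ^ 2 + (a₃ : ℂ) * z + (a₄ : ℂ)
      = (z ^ 2 + (p : ℂ) * z + (q : ℂ)) * (z ^ 2 + (r : ℂ) * z + (s : ℂ)) := by
    intro z
    have c1 : (a₁ : ℂ) = (p : ℂ) + (r : ℂ) := by exact_mod_cast congrArg (Complex.ofReal) h1
    have c2 : (a₂ : ℂ) = (q : ℂ) + (s : ℂ) + (p : ℂ) * (r : ℂ) := by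
      exact_mod_cast congrArg (Complex.ofReal) h2
    have c3 : (a₃ : ℂ) = (p : ℂ) * (s : ℂ) + (q : ℂ) * (r : ℂ) := by
      exact_mod_cast congrArg (Complex.ofReal) h3
    have c4 : (a₄ : ℂ) = (q : ℂ) * (s : ℂ) := by exact_mod_cast congrArg (Complex.ofReal) h4
    rw [c1, c2, c3, c4]; ring
  have hsplit : (∀ z : ℂ, z ^ 4 + (a₁ : ℂ) * z ^ 3 + (a₂ : ℂ) * z ^ 2 + (a₃ : ℂ) * z
        + (a₄ : ℂ) = 0 → z.re < 0) ↔
      ((∀ z : ℂ, z ^ 2 + (p : ℂ) * z + (q : ℂ) = 0 → z.re < 0) ∧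
       (∀ z : ℂ, z ^ 2 + (r : ℂ) * z + (s : ℂ) = 0 → z.re < 0)) := by
    constructor
    · intro h
      constructor
      · intro z hz
        exact h z (by rw [hfac z, hz, zero_mul])
      · intro z hz
        exact h z (by rw [hfac z, hz, mul_zero])
    · rintro ⟨hA, hB⟩ z hz
      rw [hfac z] at hz
      rcases mul_eq_zero.mp hz with h | h
      · exact hA z h
      · exact hB z h
  rw [hsplit, aux_quad_hurwitz, aux_quad_hurwitz]
  subst h1 h2 h3 h4
  constructor
  · rintro ⟨⟨hp, hq⟩, hr, hs⟩
    refine ⟨by linarith, by positivity, by positivity, by positivity, ?_⟩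
    have key : (p + r) * (q + s + p * r) * (p * s + q * r) - (p * s + q * r) ^ 2
        - (p + r) ^ 2 * (q * s)
        = p * r * ((q - s) ^ 2 + (p + r) * (p * s + q * r)) := by ring
    rw [key]
    have t1 : 0 < p * r := mul_pos hp hr
    have t2 : 0 < (p + r) * (p * s + q * r) := by
      apply mul_pos (by linarith)
      nlinarith [mul_pos hp hs, mul_pos hq hr]
    nlinarith [mul_nonneg t1.le (sq_nonneg (q - s)), mul_pos t1 t2]
  · rintro ⟨ha1, ha2, ha3, ha4, hd⟩
    have hqs : 0 < q ∧ 0 < s := by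
      rcases lt_or_ge 0 q with hq | hq
      · exact ⟨hq, by nlinarith⟩
      · exfalso
        have hq' : q < 0 := by
          rcases lt_or_eq_of_le hq with h | h
          · exact h
          · exfalso; rw [h] at ha4; simp at ha4
        have hs' : s < 0 := by nlinarith
        have hpr : 0 < p * r := by nlinarith
        have hp : 0 < p := by nlinarith
        have hr : 0 < r := by nlinarith
        nlinarith
    obtain ⟨hq, hs⟩ := hqs
    have key : (p + r) * (q + s + p * r) * (p * s + q * r) - (p * s + q * r) ^ 2
        - (p + r) ^ 2 * (q * s)
        = p * r * ((q - s) ^ 2 + (p + r) * (p * s + q * r)) := by ring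
    rw [key] at hd
    have hpos : 0 < (q - s) ^ 2 + (p + r) * (p * s + q * r) := by positivity
    have hpr : 0 < p * r := by
      by_contra hcon
      push_neg at hcon
      nlinarith
    have hp : 0 < p := by nlinarith
    exact ⟨⟨hp, hq⟩, by nlinarith, hs⟩
end

section
/- The characteristic polynomial of the Jacobian J(A₄) of the system at the interior equilibrium A₄ equals λ⁴ + a₁λ³ + a₂λ² + a₃λ + a₄, where a₁ = α₁+β₁+μ₁+α₂+β₂+μ₂+k₁G₄, a₂ = (α₁φ₁/c₁)M₄ + (α₂φ₂/c₂)G₄ + (α₁+β₁+μ₁+k₁G₄)(α₂+β₂+μ₂), a₃ = (α₁+β₁+μ₁+k₁G₄)(α₂φ₂/c₂)G₄ + (α₂+β₂+μ₂)(α₁φ₁/c₁)M₄ + α₂k₁k₂P₄G₄, a₄ = (α₁φ₁/c₁)M₄(α₂φ₂/c₂)G₄ + α₂μ₁k₁k₂P₄G₄. -/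
/-!
The Jacobian at `A₄` consists of the two 2×2 blocks of the `(P, M)` and `(L, G)` subsystems,
coupled only through the entries `∂Ṗ/∂G` and `∂L̇/∂P`; since `∂Ġ/∂L` closes the single cycle
`P → G → L → P`, its characteristic polynomial is the product of the two block characteristic
polynomials plus one coupling term. At `A₄` the equilibrium equations, reduced to
`α₁φ₁(1 - M₄/c₁) = μ₁(α₁ + β₁ + k₁G₄)` and `α₂φ₂(1 - G₄/c₂) + α₂k₂P₄ = μ₂(α₂ + β₂)`, turn the
constant terms of the block polynomials into `(α₁φ₁/c₁)M₄` and `(α₂φ₂/c₂)G₄`. These two relations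
hold because `(M₄/c₁, G₄/c₂)` is the Cramer solution of the corresponding 2×2 linear system,
whose determinant is `D`.
-/

theorem det_smul_one_sub_of_coupled_blocks {R : Type*} [CommRing R] (l a b d e f g h i j k : R) :
    (l • (1 : Matrix (Fin 4) (Fin 4) R) - !![a, b, 0, d; e, f, 0, 0; g, 0, h, i; 0, 0, j, k]).det =
      ((l - a) * (l - f) - b * e) * ((l - h) * (l - k) - i * j) - d * g * j * (l - f) := by
  rw [Matrix.det_succ_row_zero]
  simp [Fin.sum_univ_succ, Matrix.det_fin_three, Fin.succAbove, Matrix.one_apply]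
  ring

theorem mul_one_sub_one_div_div {K : Type*} [Field K] {a : K} (b : K) (ha : a ≠ 0) :
    a * (1 - 1 / (a / b)) = a - b := by
  rw [one_div_div]
  field_simp

theorem equilibrium_M₄ {α₁ β₁ μ₁ φ₁ c₁ k₁ φ₂ c₂ k₂ R₁ R₂ D M₄ G₄ : ℝ}
    (hαφ₁ : α₁ * φ₁ ≠ 0) (hc₁ : c₁ ≠ 0) (hD₀ : D ≠ 0)
    (hR₁ : R₁ = α₁ * φ₁ / (μ₁ * (α₁ + β₁)))
    (hD : D = α₁ ^ 2 * φ₁ * φ₂ + μ₁ ^ 2 * c₁ * c₂ * k₁ * k₂)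
    (hM₄ : M₄ = c₁ * α₁ * φ₂ * (α₁ * φ₁ * (1 - 1 / R₁) - μ₁ * c₂ * k₁ * (1 - 1 / R₂)) / D)
    (hG₄ : G₄ = c₂ * α₁ * φ₁ * (c₁ * μ₁ * k₂ * (1 - 1 / R₁) + α₁ * φ₂ * (1 - 1 / R₂)) / D) :
    α₁ * φ₁ * (1 - M₄ / c₁) = μ₁ * (α₁ + β₁ + k₁ * G₄) := by
  have hu := mul_one_sub_one_div_div (μ₁ * (α₁ + β₁)) hαφ₁
  rw [← hR₁] at hu
  generalize 1 - 1 / R₁ = u at hu hM₄ hG₄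
  generalize 1 - 1 / R₂ = w at hM₄ hG₄
  subst hM₄ hG₄
  field_simp
  linear_combination (-D) * hu + α₁ * φ₁ * u * hD

theorem equilibrium_G₄ {α₁ μ₁ φ₁ c₁ α₂ β₂ μ₂ φ₂ c₂ k₁ k₂ R₁ R₂ D P₄ G₄ : ℝ}
    (hαφ₂ : α₂ * φ₂ ≠ 0) (hc₂ : c₂ ≠ 0) (hD₀ : D ≠ 0)
    (hR₂ : R₂ = α₂ * φ₂ / (μ₂ * (α₂ + β₂)))
    (hD : D = α₁ ^ 2 * φ₁ * φ₂ + μ₁ ^ 2 * c₁ * c₂ * k₁ * k₂)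
    (hP₄ : P₄ = c₁ * μ₁ * φ₂ * (α₁ * φ₁ * (1 - 1 / R₁) - μ₁ * c₂ * k₁ * (1 - 1 / R₂)) / D)
    (hG₄ : G₄ = c₂ * α₁ * φ₁ * (c₁ * μ₁ * k₂ * (1 - 1 / R₁) + α₁ * φ₂ * (1 - 1 / R₂)) / D) :
    α₂ * φ₂ * (1 - G₄ / c₂) + α₂ * k₂ * P₄ = μ₂ * (α₂ + β₂) := by
  have hw := mul_one_sub_one_div_div (μ₂ * (α₂ + β₂)) hαφ₂
  rw [← hR₂] at hw
  generalize 1 - 1 / R₁ = u at hP₄ hG₄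
  generalize 1 - 1 / R₂ = w at hw hP₄ hG₄
  subst hP₄ hG₄
  field_simp
  linear_combination (-D) * hw + α₂ * φ₂ * w * hD

theorem charpoly_J_A4_general
    (α₁ β₁ μ₁ φ₁ c₁ k₁ α₂ β₂ μ₂ φ₂ c₂ k₂ : ℝ)
    (hα₁ : 0 < α₁) (hφ₁ : 0 < φ₁) (hc₁ : 0 < c₁) (hk₁ : 0 < k₁)
    (hα₂ : 0 < α₂) (hφ₂ : 0 < φ₂) (hc₂ : 0 < c₂) (hk₂ : 0 < k₂)
    (R₁ R₂ D P₄ M₄ G₄ : ℝ)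
    (hR₁ : R₁ = α₁ * φ₁ / (μ₁ * (α₁ + β₁)))
    (hR₂ : R₂ = α₂ * φ₂ / (μ₂ * (α₂ + β₂)))
    (hD : D = α₁ ^ 2 * φ₁ * φ₂ + μ₁ ^ 2 * c₁ * c₂ * k₁ * k₂)
    (hP₄ : P₄ = c₁ * μ₁ * φ₂ * (α₁ * φ₁ * (1 - 1 / R₁) - μ₁ * c₂ * k₁ * (1 - 1 / R₂)) / D)
    (hM₄ : M₄ = c₁ * α₁ * φ₂ * (α₁ * φ₁ * (1 - 1 / R₁) - μ₁ * c₂ * k₁ * (1 - 1 / R₂)) / D)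
    (hG₄ : G₄ = c₂ * α₁ * φ₁ * (c₁ * μ₁ * k₂ * (1 - 1 / R₁) + α₁ * φ₂ * (1 - 1 / R₂)) / D)
    (J : Matrix (Fin 4) (Fin 4) ℝ)
    (hJ : J = !![-(α₁ + β₁) - k₁ * G₄, φ₁ * (1 - 2 * M₄ / c₁), 0, -k₁ * P₄;
                 α₁, -μ₁, 0, 0;
                 k₂ * G₄, 0, -(α₂ + β₂), φ₂ * (1 - 2 * G₄ / c₂) + k₂ * P₄;
                 0, 0, α₂, -μ₂])
    (a₁ a₂ a₃ a₄ : ℝ)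
    (ha₁ : a₁ = α₁ + β₁ + μ₁ + α₂ + β₂ + μ₂ + k₁ * G₄)
    (ha₂ : a₂ = (α₁ * φ₁ / c₁) * M₄ + (α₂ * φ₂ / c₂) * G₄ +
      (α₁ + β₁ + μ₁ + k₁ * G₄) * (α₂ + β₂ + μ₂))
    (ha₃ : a₃ = (α₁ + β₁ + μ₁ + k₁ * G₄) * (α₂ * φ₂ / c₂) * G₄ +
      (α₂ + β₂ + μ₂) * (α₁ * φ₁ / c₁) * M₄ + α₂ * k₁ * k₂ * P₄ * G₄)
    (ha₄ : a₄ = (α₁ * φ₁ / c₁) * M₄ * (α₂ * φ₂ / c₂) * G₄ + α₂ * μ₁ * k₁ * k₂ * P₄ * G₄) :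
    ∀ l : ℝ, (l • (1 : Matrix (Fin 4) (Fin 4) ℝ) - J).det =
      l ^ 4 + a₁ * l ^ 3 + a₂ * l ^ 2 + a₃ * l + a₄ := by
  intro l
  have hD₀ : D ≠ 0 := by rw [hD]; positivity
  have h₁ := equilibrium_M₄ (by positivity) hc₁.ne' hD₀ hR₁ hD hM₄ hG₄
  have h₂ := equilibrium_G₄ (by positivity) hc₂.ne' hD₀ hR₂ hD hP₄ hG₄
  have hB₁ : (l - (-(α₁ + β₁) - k₁ * G₄)) * (l - -μ₁) - φ₁ * (1 - 2 * M₄ / c₁) * α₁ =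
      l ^ 2 + (α₁ + β₁ + μ₁ + k₁ * G₄) * l + α₁ * φ₁ / c₁ * M₄ := by
    linear_combination -h₁
  have hB₂ : (l - -(α₂ + β₂)) * (l - -μ₂) - (φ₂ * (1 - 2 * G₄ / c₂) + k₂ * P₄) * α₂ =
      l ^ 2 + (α₂ + β₂ + μ₂) * l + α₂ * φ₂ / c₂ * G₄ := by
    linear_combination -h₂
  rw [hJ, det_smul_one_sub_of_coupled_blocks, hB₁, hB₂, ha₁, ha₂, ha₃, ha₄]
  ring

/-- The characteristic polynomial of the Jacobian at the interior equilibrium A₄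
equals λ⁴ + a₁λ³ + a₂λ² + a₃λ + a₄ with the stated coefficients. -/
theorem charpoly_J_A4
    (α₁ β₁ μ₁ φ₁ c₁ k₁ α₂ β₂ μ₂ φ₂ c₂ k₂ : ℝ)
    (hα₁ : 0 < α₁) (hβ₁ : 0 < β₁) (hμ₁ : 0 < μ₁) (hφ₁ : 0 < φ₁) (hc₁ : 0 < c₁) (hk₁ : 0 < k₁)
    (hα₂ : 0 < α₂) (hβ₂ : 0 < β₂) (hμ₂ : 0 < μ₂) (hφ₂ : 0 < φ₂) (hc₂ : 0 < c₂) (hk₂ : 0 < k₂)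
    (R₁ R₂ D P₄ M₄ L₄ G₄ : ℝ)
    (hR₁ : R₁ = α₁ * φ₁ / (μ₁ * (α₁ + β₁)))
    (hR₂ : R₂ = α₂ * φ₂ / (μ₂ * (α₂ + β₂)))
    (hD : D = α₁ ^ 2 * φ₁ * φ₂ + μ₁ ^ 2 * c₁ * c₂ * k₁ * k₂)
    (hP₄ : P₄ = c₁ * μ₁ * φ₂ * (α₁ * φ₁ * (1 - 1 / R₁) - μ₁ * c₂ * k₁ * (1 - 1 / R₂)) / D)
    (hM₄ : M₄ = c₁ * α₁ * φ₂ * (α₁ * φ₁ * (1 - 1 / R₁) - μ₁ * c₂ * k₁ * (1 - 1 / R₂)) / D)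
    (hL₄ : L₄ = c₂ * μ₂ * α₁ * φ₁ * (c₁ * μ₁ * k₂ * (1 - 1 / R₁) + α₁ * φ₂ * (1 - 1 / R₂)) / (α₂ * D))
    (hG₄ : G₄ = c₂ * α₁ * φ₁ * (c₁ * μ₁ * k₂ * (1 - 1 / R₁) + α₁ * φ₂ * (1 - 1 / R₂)) / D)
    (J : Matrix (Fin 4) (Fin 4) ℝ)
    (hJ : J = !![-(α₁ + β₁) - k₁ * G₄, φ₁ * (1 - 2 * M₄ / c₁), 0, -k₁ * P₄;
                 α₁, -μ₁, 0, 0;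
                 k₂ * G₄, 0, -(α₂ + β₂), φ₂ * (1 - 2 * G₄ / c₂) + k₂ * P₄;
                 0, 0, α₂, -μ₂])
    (a₁ a₂ a₃ a₄ : ℝ)
    (ha₁ : a₁ = α₁ + β₁ + μ₁ + α₂ + β₂ + μ₂ + k₁ * G₄)
    (ha₂ : a₂ = (α₁ * φ₁ / c₁) * M₄ + (α₂ * φ₂ / c₂) * G₄ +
      (α₁ + β₁ + μ₁ + k₁ * G₄) * (α₂ + β₂ + μ₂))
    (ha₃ : a₃ = (α₁ + β₁ + μ₁ + k₁ * G₄) * (α₂ * φ₂ / c₂) * G₄ +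
      (α₂ + β₂ + μ₂) * (α₁ * φ₁ / c₁) * M₄ + α₂ * k₁ * k₂ * P₄ * G₄)
    (ha₄ : a₄ = (α₁ * φ₁ / c₁) * M₄ * (α₂ * φ₂ / c₂) * G₄ + α₂ * μ₁ * k₁ * k₂ * P₄ * G₄) :
    ∀ l : ℝ, (l • (1 : Matrix (Fin 4) (Fin 4) ℝ) - J).det =
      l ^ 4 + a₁ * l ^ 3 + a₂ * l ^ 2 + a₃ * l + a₄ :=
  charpoly_J_A4_general α₁ β₁ μ₁ φ₁ c₁ k₁ α₂ β₂ μ₂ φ₂ c₂ k₂ hα₁ hφ₁ hc₁ hk₁ hα₂ hφ₂ hc₂ hk₂ R₁ R₂ D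
    P₄ M₄ G₄ hR₁ hR₂ hD hP₄ hM₄ hG₄ J hJ a₁ a₂ a₃ a₄ ha₁ ha₂ ha₃ ha₄
end

section
/- If R₁ > 1, R₂ > 1, k₁ < k₁max, and Δ := a₁a₂a₃ - a₃² - a₁²a₄ > 0 (coefficients of the characteristic polynomial of J(A₄)), then all eigenvalues of J(A₄) have strictly negative real part; hence A₄ is a linearly asymptotically stable equilibrium of the system. -/
set_option maxHeartbeats 2000000

lemma det_fin_four' {R : Type*} [CommRing R] (a b c d e f g h i j k l m n o p : R) :
    Matrix.det !![a,b,c,d; e,f,g,h; i,j,k,l; m,n,o,p] =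
      a*(f*(k*p - l*o) - g*(j*p - l*n) + h*(j*o - k*n))
      - b*(e*(k*p - l*o) - g*(i*p - l*m) + h*(i*o - k*m))
      + c*(e*(j*p - l*n) - f*(i*p - l*m) + h*(i*n - j*m))
      - d*(e*(j*o - k*n) - f*(i*o - k*m) + g*(i*n - j*m)) := by
  rw [Matrix.det_succ_row_zero]
  simp [Fin.sum_univ_succ, Matrix.det_fin_three, Matrix.submatrix_apply, Fin.succAbove]
  norm_num [Fin.lt_def, show (Fin.castSucc (2:Fin 3)) = (2:Fin 4) from rfl, Matrix.cons_val_two, Matrix.tail_cons]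
  ring

lemma quartic_stable (a₁ a₂ a₃ a₄ : ℝ) (h1 : 0 < a₁) (h2 : 0 < a₂) (h3 : 0 < a₃) (h4 : 0 < a₄)
    (hΔ : 0 < a₁ * a₂ * a₃ - a₃ ^ 2 - a₁ ^ 2 * a₄) (z : ℂ)
    (hz : z ^ 4 + (a₁ : ℂ) * z ^ 3 + a₂ * z ^ 2 + a₃ * z + a₄ = 0) : z.re < 0 := by
  by_contra hx
  push_neg at hx
  set x := z.re with hxdef
  by_cases him : z.im = 0
  · -- z is real
    have hzx : z = (x : ℂ) := Complex.ext rfl (by simp [him])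
    rw [hzx] at hz
    have hre : x ^ 4 + a₁ * x ^ 3 + a₂ * x ^ 2 + a₃ * x + a₄ = 0 := by
      exact_mod_cast hz
    nlinarith [pow_nonneg hx 4, pow_nonneg hx 3, pow_nonneg hx 2, mul_nonneg h1.le (pow_nonneg hx 3), mul_nonneg h2.le (pow_nonneg hx 2), mul_nonneg h3.le hx]
  · set B := 2 * x with hB
    set c := x ^ 2 + z.im ^ 2 with hc
    have hBnn : 0 ≤ B := by positivity
    have hcpos : 0 < c := by positivity
    have hquad : z ^ 2 - (B : ℂ) * z + (c : ℂ) = 0 := by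
      apply Complex.ext <;>
        simp [Complex.add_re, Complex.add_im, Complex.sub_re, Complex.sub_im, pow_two,
          Complex.mul_re, Complex.mul_im, hB, hc] <;> ring
    set U := B ^ 3 - 2 * B * c + a₁ * B ^ 2 - a₁ * c + a₂ * B + a₃ with hU
    set V := c ^ 2 - B ^ 2 * c - a₁ * B * c - a₂ * c + a₄ with hV
    have key : (U : ℂ) * z + (V : ℂ) = 0 := by
      rw [hU, hV]
      push_cast
      linear_combination hz - (z ^ 2 + ((B : ℂ) + a₁) * z + ((B : ℂ) ^ 2 - c + a₁ * B + a₂)) * hquad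
    have him' : U * z.im = 0 := by
      have := congrArg Complex.im key
      simpa using this
    have hU0 : U = 0 := by
      rcases mul_eq_zero.mp him' with h | h
      · exact h
      · exact absurd h him
    have hV0 : V = 0 := by
      have := congrArg Complex.re key
      simp [hU0] at this
      simpa using this
    set t := B ^ 2 + a₁ * B + a₂ - c with ht
    have ha4 : a₄ = c * t := by rw [ht]; linarith [hV0, hV ▸ hV0]
    have htpos : 0 < t := by
      by_contra htn
      push_neg at htn
      nlinarith
    have ha3 : a₃ = a₁ * c + B * c - B * t := by
      rw [ht]; linarith [hU ▸ hU0]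
    have hbracket : 0 < (t - c) ^ 2 - a₁ * B * (t - c) + a₁ ^ 2 * c := by
      nlinarith [sq_nonneg (t - c), mul_pos h1 h3]
    have hDelta : a₁ * a₂ * a₃ - a₃ ^ 2 - a₁ ^ 2 * a₄ =
        -(B * (B + a₁) * ((t - c) ^ 2 - a₁ * B * (t - c) + a₁ ^ 2 * c)) := by
      rw [ha3, ha4, ht]; ring
    nlinarith [mul_nonneg (mul_nonneg hBnn (by linarith : (0:ℝ) ≤ B + a₁)) hbracket.le]

/-- Under R₁ > 1, R₂ > 1, k₁ < k₁max and Δ = a₁a₂a₃ - a₃² - a₁²a₄ > 0, all eigenvalues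
of the Jacobian at A₄ have strictly negative real part (linear asymptotic stability). -/
theorem A4_linearly_stable
    (α₁ β₁ μ₁ φ₁ c₁ k₁ α₂ β₂ μ₂ φ₂ c₂ k₂ : ℝ)
    (hα₁ : 0 < α₁) (hβ₁ : 0 < β₁) (hμ₁ : 0 < μ₁) (hφ₁ : 0 < φ₁) (hc₁ : 0 < c₁) (hk₁ : 0 < k₁)
    (hα₂ : 0 < α₂) (hβ₂ : 0 < β₂) (hμ₂ : 0 < μ₂) (hφ₂ : 0 < φ₂) (hc₂ : 0 < c₂) (hk₂ : 0 < k₂)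
    (R₁ R₂ D P₄ M₄ L₄ G₄ : ℝ)
    (hR₁ : R₁ = α₁ * φ₁ / (μ₁ * (α₁ + β₁)))
    (hR₂ : R₂ = α₂ * φ₂ / (μ₂ * (α₂ + β₂)))
    (hD : D = α₁ ^ 2 * φ₁ * φ₂ + μ₁ ^ 2 * c₁ * c₂ * k₁ * k₂)
    (hP₄ : P₄ = c₁ * μ₁ * φ₂ * (α₁ * φ₁ * (1 - 1 / R₁) - μ₁ * c₂ * k₁ * (1 - 1 / R₂)) / D)
    (hM₄ : M₄ = c₁ * α₁ * φ₂ * (α₁ * φ₁ * (1 - 1 / R₁) - μ₁ * c₂ * k₁ * (1 - 1 / R₂)) / D)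
    (hL₄ : L₄ = c₂ * μ₂ * α₁ * φ₁ * (c₁ * μ₁ * k₂ * (1 - 1 / R₁) + α₁ * φ₂ * (1 - 1 / R₂)) / (α₂ * D))
    (hG₄ : G₄ = c₂ * α₁ * φ₁ * (c₁ * μ₁ * k₂ * (1 - 1 / R₁) + α₁ * φ₂ * (1 - 1 / R₂)) / D)
    (hR₁gt : 1 < R₁) (hR₂gt : 1 < R₂)
    (hk : k₁ < α₁ * φ₁ * (1 - 1 / R₁) / (c₂ * μ₁ * (1 - 1 / R₂)))
    (a₁ a₂ a₃ a₄ : ℝ)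
    (ha₁ : a₁ = α₁ + β₁ + μ₁ + α₂ + β₂ + μ₂ + k₁ * G₄)
    (ha₂ : a₂ = (α₁ * φ₁ / c₁) * M₄ + (α₂ * φ₂ / c₂) * G₄ +
      (α₁ + β₁ + μ₁ + k₁ * G₄) * (α₂ + β₂ + μ₂))
    (ha₃ : a₃ = (α₁ + β₁ + μ₁ + k₁ * G₄) * (α₂ * φ₂ / c₂) * G₄ +
      (α₂ + β₂ + μ₂) * (α₁ * φ₁ / c₁) * M₄ + α₂ * k₁ * k₂ * P₄ * G₄)
    (ha₄ : a₄ = (α₁ * φ₁ / c₁) * (α₂ * φ₂ / c₂) * M₄ * G₄ + α₂ * μ₁ * k₁ * k₂ * P₄ * G₄)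
    (hΔ : 0 < a₁ * a₂ * a₃ - a₃ ^ 2 - a₁ ^ 2 * a₄)
    (J : Matrix (Fin 4) (Fin 4) ℝ)
    (hJ : J = !![-(α₁ + β₁) - k₁ * G₄, φ₁ * (1 - 2 * M₄ / c₁), 0, -k₁ * P₄;
                 α₁, -μ₁, 0, 0;
                 k₂ * G₄, 0, -(α₂ + β₂), φ₂ * (1 - 2 * G₄ / c₂) + k₂ * P₄;
                 0, 0, α₂, -μ₂]) :
    ∀ z : ℂ, (z • (1 : Matrix (Fin 4) (Fin 4) ℂ) - J.map (fun x => (x : ℂ))).det = 0 →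
      z.re < 0 := by
  intro z hz
  -- basic positivity
  have hR₁pos : 0 < R₁ := by linarith
  have hR₂pos : 0 < R₂ := by linarith
  have h1R : 0 < 1 - 1 / R₁ := by
    have : 1 / R₁ < 1 := by rw [div_lt_one hR₁pos]; exact hR₁gt
    linarith
  have h2R : 0 < 1 - 1 / R₂ := by
    have : 1 / R₂ < 1 := by rw [div_lt_one hR₂pos]; exact hR₂gt
    linarith
  have hDpos : 0 < D := by rw [hD]; positivity
  have hE : 0 < α₁ * φ₁ * (1 - 1 / R₁) - μ₁ * c₂ * k₁ * (1 - 1 / R₂) := by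
    have hden : 0 < c₂ * μ₁ * (1 - 1 / R₂) := by positivity
    have := (lt_div_iff₀ hden).mp hk
    nlinarith
  have hF : 0 < c₁ * μ₁ * k₂ * (1 - 1 / R₁) + α₁ * φ₂ * (1 - 1 / R₂) := by
    have h1 : 0 < c₁ * μ₁ * k₂ * (1 - 1 / R₁) := by positivity
    have h2 : 0 < α₁ * φ₂ * (1 - 1 / R₂) := by positivity
    linarith
  have hPpos : 0 < P₄ := by
    rw [hP₄]; exact div_pos (mul_pos (by positivity) hE) hDpos
  have hMpos : 0 < M₄ := by
    rw [hM₄]; exact div_pos (mul_pos (by positivity) hE) hDpos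
  have hGpos : 0 < G₄ := by
    rw [hG₄]; exact div_pos (mul_pos (by positivity) hF) hDpos
  have ha₁pos : 0 < a₁ := by rw [ha₁]; positivity
  have ha₂pos : 0 < a₂ := by rw [ha₂]; positivity
  have ha₃pos : 0 < a₃ := by rw [ha₃]; positivity
  have ha₄pos : 0 < a₄ := by rw [ha₄]; positivity
  -- equilibrium identities
  have hc₁' : c₁ ≠ 0 := ne_of_gt hc₁
  have hc₂' : c₂ ≠ 0 := ne_of_gt hc₂
  have hμ₁' : μ₁ ≠ 0 := ne_of_gt hμ₁
  have hμ₂' : μ₂ ≠ 0 := ne_of_gt hμ₂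
  have hα₁' : α₁ ≠ 0 := ne_of_gt hα₁
  have hα₂' : α₂ ≠ 0 := ne_of_gt hα₂
  have hφ₁' : φ₁ ≠ 0 := ne_of_gt hφ₁
  have hφ₂' : φ₂ ≠ 0 := ne_of_gt hφ₂
  have hab₁ : α₁ + β₁ ≠ 0 := by positivity
  have hab₂ : α₂ + β₂ ≠ 0 := by positivity
  have hD' : D ≠ 0 := ne_of_gt hDpos
  have e1 : α₁ * (φ₁ * (1 - 2 * M₄ / c₁)) = μ₁ * (α₁ + β₁ + k₁ * G₄) - (α₁ * φ₁ / c₁) * M₄ := by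
    subst hM₄ hG₄ hR₁ hR₂
    rw [hD] at *
    field_simp
    ring
  have e2 : α₂ * (φ₂ * (1 - 2 * G₄ / c₂) + k₂ * P₄) = μ₂ * (α₂ + β₂) - (α₂ * φ₂ / c₂) * G₄ := by
    subst hP₄ hG₄ hR₁ hR₂
    rw [hD] at *
    field_simp
    ring
  -- characteristic polynomial
  have hdet : (z • (1 : Matrix (Fin 4) (Fin 4) ℂ) - J.map (fun x => (x : ℂ))).det
      = z ^ 4 + (a₁ : ℂ) * z ^ 3 + a₂ * z ^ 2 + a₃ * z + a₄ := by
    subst hJ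
    have hMat : z • (1 : Matrix (Fin 4) (Fin 4) ℂ) -
        (!![-(α₁ + β₁) - k₁ * G₄, φ₁ * (1 - 2 * M₄ / c₁), 0, -k₁ * P₄;
            α₁, -μ₁, 0, 0;
            k₂ * G₄, 0, -(α₂ + β₂), φ₂ * (1 - 2 * G₄ / c₂) + k₂ * P₄;
            0, 0, α₂, -μ₂] : Matrix (Fin 4) (Fin 4) ℝ).map (fun x => (x : ℂ)) =
        !![z + ((α₁ : ℂ) + β₁) + k₁ * G₄, -(φ₁ * (1 - 2 * M₄ / c₁)), 0, k₁ * P₄;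
           -α₁, z + μ₁, 0, 0;
           -(k₂ * G₄), 0, z + ((α₂ : ℂ) + β₂), -(φ₂ * (1 - 2 * G₄ / c₂) + k₂ * P₄);
           0, 0, -α₂, z + μ₂] := by
      ext i j
      fin_cases i <;> fin_cases j <;>
        simp [Matrix.one_apply, Matrix.vecHead, Matrix.vecTail] <;> push_cast <;> ring
    rw [hMat, det_fin_four']
    rw [ha₁, ha₂, ha₃, ha₄]
    have e1c : (α₁ : ℂ) * (φ₁ * (1 - 2 * M₄ / c₁))
        = μ₁ * (α₁ + β₁ + k₁ * G₄) - (α₁ * φ₁ / c₁) * M₄ := by exact_mod_cast congrArg Complex.ofReal e1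
    have e2c : (α₂ : ℂ) * (φ₂ * (1 - 2 * G₄ / c₂) + k₂ * P₄)
        = μ₂ * (α₂ + β₂) - (α₂ * φ₂ / c₂) * G₄ := by exact_mod_cast congrArg Complex.ofReal e2
    push_cast
    linear_combination (-(z ^ 2 + ((α₂ : ℂ) + β₂ + μ₂) * z +
        ((μ₂ : ℂ) * (α₂ + β₂) - α₂ * (φ₂ * (1 - 2 * G₄ / c₂) + k₂ * P₄)))) * e1c
      + (-(z ^ 2 + ((α₁ : ℂ) + β₁ + μ₁ + k₁ * G₄) * z + (α₁ * φ₁ / c₁) * M₄)) * e2c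
  rw [hdet] at hz
  exact quartic_stable a₁ a₂ a₃ a₄ ha₁pos ha₂pos ha₃pos ha₄pos hΔ z hz
end

section
/- If a₁, a₂, a₃, a₄ > 0 and a₃² - a₁a₂a₃ + a₁²a₄ = 0, then the quartic λ⁴ + a₁λ³ + a₂λ² + a₃λ + a₄ has exactly two roots on the imaginary axis (namely ±i√(a₃/a₁)) and its other two roots have strictly negative real part. -/
/-!
The hypothesis says that the third Hurwitz determinant `a₁a₂a₃ - a₃² - a₁²a₄` of the quartic
vanishes, and this is exactly what makes the quartic split as
`(λ² + a₃/a₁)(λ² + a₁λ + a₁a₄/a₃)`. The first factor has the roots `±i√(a₃/a₁)`; the second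
has positive real coefficients, so each of its roots is either real (hence negative) or
non-real with real part `-a₁/2`.
-/

open Complex

theorem re_neg_of_sq_add_mul_add_eq_zero {p q : ℝ} (hp : 0 < p) (hq : 0 < q) {z : ℂ}
    (hz : z ^ 2 + p * z + q = 0) : z.re < 0 := by
  have hre := congrArg re hz
  have him := congrArg im hz
  simp only [sq, add_re, add_im, mul_re, mul_im, ofReal_re, ofReal_im, zero_re, zero_im]
    at hre him
  have him' : z.im * (2 * z.re + p) = 0 := by linear_combination him
  rcases mul_eq_zero.mp him' with him_eq | hre_eq
  · rw [him_eq] at hre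
    nlinarith [sq_nonneg z.re]
  · linarith

theorem quartic_eq_mul_of_hurwitz_det_eq_zero {K : Type*} [Field K] {a₁ a₂ a₃ a₄ : K}
    (ha₁ : a₁ ≠ 0) (ha₃ : a₃ ≠ 0) (h : a₃ ^ 2 - a₁ * a₂ * a₃ + a₁ ^ 2 * a₄ = 0) (z : K) :
    z ^ 4 + a₁ * z ^ 3 + a₂ * z ^ 2 + a₃ * z + a₄ =
      (z ^ 2 + a₃ / a₁) * (z ^ 2 + a₁ * z + a₁ * a₄ / a₃) := by
  field_simp
  linear_combination (-z ^ 2) * h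

theorem quartic_two_imaginary_roots_general
    (a₁ a₂ a₃ a₄ : ℝ)
    (ha₁ : 0 < a₁) (ha₃ : 0 < a₃) (ha₄ : 0 < a₄)
    (h : a₃ ^ 2 - a₁ * a₂ * a₃ + a₁ ^ 2 * a₄ = 0) :
    (I * Real.sqrt (a₃ / a₁)) ^ 4 + (a₁ : ℂ) * (I * Real.sqrt (a₃ / a₁)) ^ 3 +
      (a₂ : ℂ) * (I * Real.sqrt (a₃ / a₁)) ^ 2 + (a₃ : ℂ) * (I * Real.sqrt (a₃ / a₁)) +
      (a₄ : ℂ) = 0 ∧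
    (∀ z : ℂ, z ^ 4 + (a₁ : ℂ) * z ^ 3 + (a₂ : ℂ) * z ^ 2 + (a₃ : ℂ) * z + (a₄ : ℂ) = 0 →
      z = I * Real.sqrt (a₃ / a₁) ∨ z = -(I * Real.sqrt (a₃ / a₁)) ∨ z.re < 0) := by
  have hfactor := quartic_eq_mul_of_hurwitz_det_eq_zero (a₁ := (a₁ : ℂ)) (a₂ := a₂) (a₃ := a₃)
    (a₄ := a₄) (by exact_mod_cast ha₁.ne') (by exact_mod_cast ha₃.ne') (by exact_mod_cast h)
  have hroot : (I * Real.sqrt (a₃ / a₁)) ^ 2 + (a₃ : ℂ) / a₁ = 0 := by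
    rw [mul_pow, I_sq, ← ofReal_pow, Real.sq_sqrt (by positivity), ofReal_div]
    ring
  refine ⟨by rw [hfactor, hroot, zero_mul], fun z hz => ?_⟩
  rcases mul_eq_zero.mp (hfactor z ▸ hz) with himag | hstable
  · have hsq : z ^ 2 = (I * Real.sqrt (a₃ / a₁)) ^ 2 := by linear_combination himag - hroot
    rcases (Commute.all _ _).sq_eq_sq_iff_eq_or_eq_neg.mp hsq with hpos | hneg
    · exact Or.inl hpos
    · exact Or.inr (Or.inl hneg)
  · refine Or.inr (Or.inr (re_neg_of_sq_add_mul_add_eq_zero ha₁ (q := a₁ * a₄ / a₃)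
      (by positivity) ?_))
    push_cast
    exact hstable

/-- If a₁, a₂, a₃, a₄ > 0 and a₃² - a₁a₂a₃ + a₁²a₄ = 0, the quartic has exactly two
roots on the imaginary axis, namely ±i√(a₃/a₁), and the other roots have negative
real part. -/
theorem quartic_two_imaginary_roots
    (a₁ a₂ a₃ a₄ : ℝ)
    (ha₁ : 0 < a₁) (ha₂ : 0 < a₂) (ha₃ : 0 < a₃) (ha₄ : 0 < a₄)
    (h : a₃ ^ 2 - a₁ * a₂ * a₃ + a₁ ^ 2 * a₄ = 0) :
    (I * Real.sqrt (a₃ / a₁)) ^ 4 + (a₁ : ℂ) * (I * Real.sqrt (a₃ / a₁)) ^ 3 +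
      (a₂ : ℂ) * (I * Real.sqrt (a₃ / a₁)) ^ 2 + (a₃ : ℂ) * (I * Real.sqrt (a₃ / a₁)) +
      (a₄ : ℂ) = 0 ∧
    (∀ z : ℂ, z ^ 4 + (a₁ : ℂ) * z ^ 3 + (a₂ : ℂ) * z ^ 2 + (a₃ : ℂ) * z + (a₄ : ℂ) = 0 →
      z = I * Real.sqrt (a₃ / a₁) ∨ z = -(I * Real.sqrt (a₃ / a₁)) ∨ z.re < 0) :=
  quartic_two_imaginary_roots_general a₁ a₂ a₃ a₄ ha₁ ha₃ ha₄ h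
end
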